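/- arXiv:2504.15505 — 3 statements merged into one kernel-verified Lean document; each statement's English description precedes it below -/
import Mathlib

section
/- Let p > 3 be prime. For the family S_λ = Σ_{x ∈ F_p} σ(x³ + λ x) (λ ∈ F_p), the variance (1/p)Σ_λ S_λ² − ((1/p)Σ_λ S_λ)² equals (1 + σ(−1))·(p − 1). -/
/-!
Write `χ` for the quadratic character and `q = |F|`. Summing first over `λ`, the first moment
vanishes because `λ ↦ x³ + λx` is a bijection for `x ≠ 0`. For the second moment, factor
`x³ + λx = x(λ + x²)`, so that the sum over `λ` becomes `χ(xy) · ∑_λ χ((λ + x²)(λ + y²))`. This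
is a Jacobsthal-type sum: it equals `q - 1` if `x² = y²` and `-1` otherwise. The `-1` part
contributes `-(∑ χ)² = 0`, and the diagonal `y = ±x` contributes `q (1 + χ(-1))` for each `x ≠ 0`.
-/

open Finset

section QuadraticCharSums

variable {F : Type*} [Field F] [Fintype F] [DecidableEq F]

local notation "χ" => quadraticChar F

lemma quadraticChar_sum_mul_add_eq_zero (hF : ringChar F ≠ 2) {a : F} (ha : a ≠ 0) (b : F) :
    ∑ x : F, χ (a * x + b) = 0 := by
  rw [Fintype.sum_equiv ((Equiv.mulLeft₀ a ha).trans (Equiv.addRight b)) (fun x => χ (a * x + b)) χ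
    fun _ => rfl, quadraticChar_sum_zero hF]

lemma quadraticChar_sum_sq : ∑ x : F, χ (x ^ 2) = Fintype.card F - 1 := by
  have h : ∀ x : F, χ (x ^ 2) = 1 - if x = 0 then 1 else 0 := fun x => by
    by_cases hx : x = 0
    · simp [hx]
    · simp [hx, quadraticChar_sq_one' hx]
  simp only [h, sum_sub_distrib, sum_ite_eq', mem_univ, if_true, sum_const, card_univ,
    nsmul_eq_mul, mul_one]

lemma quadraticChar_sum_mul_add_self (hF : ringChar F ≠ 2) {a : F} (ha : a ≠ 0) :
    ∑ u : F, χ (u * (u + a)) = -1 := by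
  -- `u (u + a) = u² (a u⁻¹ + 1)`, and the junk value `0⁻¹ = 0` makes the right side `1` at `u = 0`.
  have h : ∀ u : F, χ (a * u⁻¹ + 1) = χ (u * (u + a)) + if u = 0 then 1 else 0 := fun u => by
    by_cases hu : u = 0
    · simp [hu]
    · rw [if_neg hu, add_zero, show u * (u + a) = u ^ 2 * (a * u⁻¹ + 1) by field_simp; ring,
        map_mul, quadraticChar_sq_one' hu, one_mul]
  have hinv : ∑ u : F, χ (a * u⁻¹ + 1) = 0 := by
    rw [Fintype.sum_equiv (Equiv.inv F) (fun u => χ (a * u⁻¹ + 1)) (fun v => χ (a * v + 1))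
      fun _ => rfl, quadraticChar_sum_mul_add_eq_zero hF ha]
  simp only [h, sum_add_distrib, sum_ite_eq', mem_univ, if_true] at hinv
  linear_combination hinv

lemma quadraticChar_sum_add_mul_add (hF : ringChar F ≠ 2) (a b : F) :
    ∑ l : F, χ ((l + a) * (l + b)) = (if a = b then (Fintype.card F : ℤ) else 0) - 1 := by
  rw [← Fintype.sum_equiv (Equiv.subRight a) (fun u => χ (u * (u + (b - a)))) _
    fun u => by simp only [Equiv.subRight_apply]; ring_nf]
  by_cases hab : a = b
  · simp only [hab, sub_self, add_zero, if_true, ← sq, quadraticChar_sum_sq]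
  · rw [if_neg hab, quadraticChar_sum_mul_add_self hF (sub_ne_zero.mpr (Ne.symm hab)), zero_sub]

lemma quadraticChar_sum_ite_sq_eq_sq (hF : ringChar F ≠ 2) (x : F) :
    ∑ y : F, (if x ^ 2 = y ^ 2 then χ (x * y) else 0) = (1 + χ (-1)) * χ (x ^ 2) := by
  by_cases hx : x = 0
  · simp [hx]
  have hroots : univ.filter (fun y : F => x ^ 2 = y ^ 2) = {x, -x} := by
    ext y
    simp only [mem_filter, mem_univ, true_and, mem_insert, mem_singleton,
      sq_eq_sq_iff_eq_or_eq_neg, eq_comm (a := x)]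
    rw [neg_eq_iff_eq_neg]
  have hx_ne_neg : x ≠ -x := fun h => hx ((Ring.eq_self_iff_eq_zero_of_char_ne_two hF).mp h.symm)
  rw [← sum_filter, hroots, sum_pair hx_ne_neg,
    show x * -x = -1 * x ^ 2 by ring, ← sq, map_mul]
  ring

lemma sum_sum_quadraticChar_cube_add_mul (hF : ringChar F ≠ 2) :
    ∑ l : F, ∑ x : F, χ (x ^ 3 + l * x) = 0 := by
  rw [sum_comm]
  refine sum_eq_zero fun x _ => ?_
  by_cases hx : x = 0
  · simp [hx]
  · simp_rw [add_comm (x ^ 3), mul_comm _ x]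
    exact quadraticChar_sum_mul_add_eq_zero hF hx _

lemma sum_sq_sum_quadraticChar_cube_add_mul (hF : ringChar F ≠ 2) :
    ∑ l : F, (∑ x : F, χ (x ^ 3 + l * x)) ^ 2
      = (1 + χ (-1)) * (Fintype.card F - 1) * Fintype.card F := by
  have hfactor : ∀ x y l : F,
      χ (x ^ 3 + l * x) * χ (y ^ 3 + l * y) = χ (x * y) * χ ((l + x ^ 2) * (l + y ^ 2)) := by
    intro x y l
    rw [show x ^ 3 + l * x = x * (l + x ^ 2) by ring, show y ^ 3 + l * y = y * (l + y ^ 2) by ring]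
    simp only [map_mul]
    ring
  have hsum_mul : ∑ x : F, ∑ y : F, χ (x * y) = 0 := by
    simp only [map_mul, ← mul_sum, ← sum_mul, quadraticChar_sum_zero hF, zero_mul]
  calc ∑ l : F, (∑ x : F, χ (x ^ 3 + l * x)) ^ 2
      = ∑ x : F, ∑ y : F, χ (x * y) * ∑ l : F, χ ((l + x ^ 2) * (l + y ^ 2)) := by
        simp_rw [mul_sum, ← hfactor, sq, sum_mul_sum]
        rw [sum_comm]
        exact sum_congr rfl fun x _ => sum_comm
    _ = ∑ x : F, ∑ y : F,
          (Fintype.card F * (if x ^ 2 = y ^ 2 then χ (x * y) else 0) - χ (x * y)) := by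
        simp_rw [quadraticChar_sum_add_mul_add hF]
        refine sum_congr rfl fun x _ => sum_congr rfl fun y _ => ?_
        split_ifs <;> ring
    _ = Fintype.card F * ((1 + χ (-1)) * ∑ x : F, χ (x ^ 2)) := by
        simp_rw [sum_sub_distrib, ← mul_sum, quadraticChar_sum_ite_sq_eq_sq hF, hsum_mul, sub_zero]
        simp only [mul_sum]
    _ = (1 + χ (-1)) * (Fintype.card F - 1) * Fintype.card F := by
        rw [quadraticChar_sum_sq]
        ring

end QuadraticCharSums

theorem stmt5 (p : ℕ) [Fact p.Prime] (hp : 3 < p) :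
    ((((∑ l : ZMod p, (∑ x : ZMod p, quadraticChar (ZMod p) (x ^ 3 + l * x)) ^ 2) : ℤ) : ℚ) / p) -
      ((((∑ l : ZMod p, ∑ x : ZMod p, quadraticChar (ZMod p) (x ^ 3 + l * x)) : ℤ) : ℚ) / p) ^ 2
      = (1 + quadraticChar (ZMod p) (-1)) * (p - 1) := by
  have hF : ringChar (ZMod p) ≠ 2 := by
    rw [ZMod.ringChar_zmod_n]
    omega
  have hp0 : (p : ℚ) ≠ 0 := by exact_mod_cast (Fact.out : p.Prime).ne_zero
  rw [sum_sum_quadraticChar_cube_add_mul hF, sum_sq_sum_quadraticChar_cube_add_mul hF, ZMod.card]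
  push_cast
  field_simp
  ring
end

section
/- Let p > 3 be prime with p ≡ 2 (mod 3) and c ∈ F_p nonzero. For S_λ = Σ_{x ∈ F_p} σ(x³ + λ x² + c), the variance of (S_λ)_{λ∈F_p} equals p − 2 − 1/p. -/
/-!
For `x ≠ 0` we have `x³ + λx² + c = x² (λ + g x)` with `g x = x + c / x²`, so
`S_λ = σ c + ∑_{x ≠ 0} σ (λ + g x)`. Summing a shifted character sum over `λ` gives `0`, whence
`∑ S_λ = p σ c`; and the Jacobsthal-type evaluation `∑_λ σ ((λ + a)(λ + b)) = p [a = b] - 1`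
turns `∑ S_λ²` into `p + p M - (p - 1)²`, where `M` counts pairs `x, y ≠ 0` with `g x = g y`.
Off the diagonal, `g x = g y` means `x² y² = c (x + y)`, a quadratic in `y` with
`1 + σ (c² + 4 c x³)` roots. Since cubing permutes `F_p` when `p ≡ 2 (mod 3)`, summing over `x`
gives `M = 2p - 4`, and the variance is `M - (p - 1)² / p = p - 2 - 1 / p`.
-/

open Finset

section

variable {F : Type*} [Field F] [Fintype F] [DecidableEq F]

theorem pow_bijective_of_coprime_card_sub_one {n : ℕ} (hn : n ≠ 0)
    (h : (Fintype.card F - 1).Coprime n) : Function.Bijective (fun x : F ↦ x ^ n) := by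
  have hunits : Function.Injective (fun u : Fˣ ↦ u ^ n) :=
    (Nat.Coprime.pow_left_bijective (by rwa [Nat.card_eq_fintype_card, Fintype.card_units])).1
  refine Finite.injective_iff_bijective.mp fun x y hxy ↦ ?_
  rcases eq_or_ne x 0 with rfl | hx
  · exact ((pow_eq_zero_iff hn).mp (hxy.symm.trans (zero_pow hn))).symm
  rcases eq_or_ne y 0 with rfl | hy
  · exact (pow_eq_zero_iff hn).mp (hxy.trans (zero_pow hn))
  have := hunits (a₁ := Units.mk0 x hx) (a₂ := Units.mk0 y hy) (Units.ext (by simpa using hxy))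
  simpa using congrArg Units.val this

theorem sum_quadraticChar_add_mul (hF : ringChar F ≠ 2) (b : F) {a : F} (ha : a ≠ 0) :
    ∑ x : F, quadraticChar F (b + a * x) = 0 := by
  rw [← quadraticChar_sum_zero hF]
  exact Fintype.sum_equiv ((Equiv.mulLeft₀ a ha).trans (Equiv.addLeft b)) _ _ fun _ ↦ rfl

theorem sum_quadraticChar_mul_add_self (hF : ringChar F ≠ 2) (d : F) :
    ∑ x : F, quadraticChar F (x * (x + d)) =
      if d = 0 then (Fintype.card F : ℤ) - 1 else -1 := by
  have hpoint (x : F) : quadraticChar F (x * (x + d)) =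
      quadraticChar F (1 + d * x⁻¹) - if x = 0 then 1 else 0 := by
    rcases eq_or_ne x 0 with rfl | hx
    · simp
    · rw [if_neg hx, sub_zero, show x * (x + d) = x ^ 2 * (1 + d * x⁻¹) by field_simp,
        map_mul, quadraticChar_sq_one' hx, one_mul]
  rw [sum_congr rfl fun x _ ↦ hpoint x, sum_sub_distrib, Fintype.sum_ite_eq',
    Fintype.sum_equiv (Equiv.inv F) (fun x ↦ quadraticChar F (1 + d * x⁻¹))
      (fun x ↦ quadraticChar F (1 + d * x)) fun _ ↦ rfl]
  split_ifs with hd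
  · simp [hd]
  · rw [sum_quadraticChar_add_mul hF 1 hd, zero_sub]

theorem sum_quadraticChar_add_mul_add (hF : ringChar F ≠ 2) (a b : F) :
    ∑ x : F, quadraticChar F ((x + a) * (x + b)) =
      if a = b then (Fintype.card F : ℤ) - 1 else -1 := by
  rw [← Equiv.sum_comp (Equiv.subRight a)]
  simp_rw [Equiv.subRight_apply, sub_add_cancel, sub_add_eq_add_sub, add_sub_assoc,
    sum_quadraticChar_mul_add_self hF, sub_eq_zero, eq_comm]

theorem card_quadratic_roots (hF : ringChar F ≠ 2) {a : F} (ha : a ≠ 0) (b c : F) :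
    (#{x | a * (x * x) + b * x + c = 0} : ℤ) = quadraticChar F (discrim a b c) + 1 := by
  have : NeZero (2 : F) := ⟨Ring.two_ne_zero hF⟩
  rw [← quadraticChar_card_sqrts hF, Set.toFinset_ofPred]
  congr 1
  let e : F ≃ F := (Equiv.mulLeft₀ (2 * a) (mul_ne_zero two_ne_zero ha)).trans (.addRight b)
  refine card_equiv e fun x ↦ ?_
  simp [e, quadratic_eq_zero_iff_discrim_eq_sq ha, eq_comm]

theorem sum_sum_quadraticChar_add {ι : Type*} (hF : ringChar F ≠ 2) (s : Finset ι)
    (g : ι → F) : ∑ l : F, ∑ i ∈ s, quadraticChar F (l + g i) = 0 := by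
  rw [sum_comm]
  exact sum_eq_zero fun i _ ↦
    (Equiv.sum_comp (Equiv.addRight (g i)) _).trans (quadraticChar_sum_zero hF)

theorem sum_sq_sum_quadraticChar_add {ι : Type*} (hF : ringChar F ≠ 2) (s : Finset ι)
    (g : ι → F) :
    ∑ l : F, (∑ i ∈ s, quadraticChar F (l + g i)) ^ 2 =
      Fintype.card F * ∑ i ∈ s, (#{j ∈ s | g i = g j} : ℤ) - (#s : ℤ) ^ 2 := by
  calc ∑ l : F, (∑ i ∈ s, quadraticChar F (l + g i)) ^ 2
      = ∑ i ∈ s, ∑ j ∈ s, ∑ l : F, quadraticChar F ((l + g i) * (l + g j)) := by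
        simp_rw [sq, sum_mul_sum, map_mul]
        rw [sum_comm]
        exact sum_congr rfl fun i _ ↦ sum_comm
    _ = ∑ i ∈ s, ∑ j ∈ s, ((Fintype.card F : ℤ) * (if g i = g j then 1 else 0) - 1) := by
        refine sum_congr rfl fun i _ ↦ sum_congr rfl fun j _ ↦ ?_
        rw [sum_quadraticChar_add_mul_add hF]
        split_ifs <;> ring
    _ = _ := by
        simp [sum_sub_distrib, mul_sum, sq, ← sum_filter, mul_comm]

def cubicCharSum (c l : F) : ℤ := ∑ x : F, quadraticChar F (x ^ 3 + l * x ^ 2 + c)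

def cubicShift (c x : F) : F := x + c / x ^ 2

theorem cubicCharSum_eq (c l : F) :
    cubicCharSum c l =
      quadraticChar F c + ∑ x ∈ univ.erase 0, quadraticChar F (l + cubicShift c x) := by
  rw [cubicCharSum, ← add_sum_erase _ _ (mem_univ 0)]
  congr 1
  · simp
  refine sum_congr rfl fun x hx ↦ ?_
  have hx : x ≠ 0 := ne_of_mem_erase hx
  rw [show x ^ 3 + l * x ^ 2 + c = x ^ 2 * (l + cubicShift c x) by
      rw [cubicShift]; field_simp; ring,
    map_mul, quadraticChar_sq_one' hx, one_mul]

theorem sum_cubicCharSum (hF : ringChar F ≠ 2) (c : F) :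
    ∑ l : F, cubicCharSum c l = Fintype.card F * quadraticChar F c := by
  simp_rw [cubicCharSum_eq, sum_add_distrib, sum_sum_quadraticChar_add hF]
  simp

variable {c : F}

theorem filter_cubicShift_eq_insert (hc : c ≠ 0) {x : F} (hx : x ≠ 0) :
    {y ∈ univ.erase (0 : F) | cubicShift c x = cubicShift c y} =
      insert x ({y | x ^ 2 * (y * y) + -c * y + -(c * x) = 0} : Finset F) := by
  have key (y : F) (hy : y ≠ 0) : (x - y) * (x ^ 2 * (y * y) + -c * y + -(c * x)) =
      x ^ 2 * y ^ 2 * (cubicShift c x - cubicShift c y) := by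
    rw [cubicShift, cubicShift]
    field_simp
    ring
  ext y
  simp only [mem_filter, mem_erase, mem_univ, mem_insert, true_and, and_true]
  constructor
  · rintro ⟨hy, h⟩
    have := key y hy
    rw [h, sub_self, mul_zero, mul_eq_zero, sub_eq_zero] at this
    exact this.imp (fun h ↦ h.symm) id
  · rintro (rfl | h)
    · exact ⟨hx, rfl⟩
    have hy : y ≠ 0 := by
      rintro rfl
      exact mul_ne_zero hc hx (by linear_combination -h)
    have := key y hy
    rw [h, mul_zero, eq_comm, mul_eq_zero, sub_eq_zero] at this
    exact ⟨hy, this.resolve_left (by positivity)⟩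

theorem card_filter_cubicShift_eq (hF : ringChar F ≠ 2) (hc : c ≠ 0) {x : F}
    (hx : x ≠ 0) :
    (#{y ∈ univ.erase 0 | cubicShift c x = cubicShift c y} : ℤ) =
      quadraticChar F (c ^ 2 + 4 * c * x ^ 3) + 2 - if x ^ 3 = 2 * c then 1 else 0 := by
  have hroot : x ^ 2 * (x * x) + -c * x + -(c * x) = 0 ↔ x ^ 3 = 2 * c := by
    rw [show x ^ 2 * (x * x) + -c * x + -(c * x) = x * (x ^ 3 - 2 * c) by ring, mul_eq_zero,
      sub_eq_zero, or_iff_right hx]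
  have hcard := card_quadratic_roots hF (pow_ne_zero 2 hx) (-c) (-(c * x))
  rw [show discrim (x ^ 2) (-c) (-(c * x)) = c ^ 2 + 4 * c * x ^ 3 by rw [discrim]; ring] at hcard
  rw [filter_cubicShift_eq_insert hc hx, card_insert_eq_ite]
  simp only [mem_filter, mem_univ, true_and, hroot]
  split_ifs <;> push_cast <;> linarith

theorem sum_card_filter_cubicShift_eq (hF : ringChar F ≠ 2) (hc : c ≠ 0)
    (h3 : (Fintype.card F - 1).Coprime 3) :
    ∑ x ∈ univ.erase (0 : F),
        (#{y ∈ univ.erase (0 : F) | cubicShift c x = cubicShift c y} : ℤ) =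
      2 * Fintype.card F - 4 := by
  let cube : F ≃ F := .ofBijective _ (pow_bijective_of_coprime_card_sub_one three_ne_zero h3)
  have h2 : (2 : F) ≠ 0 := Ring.two_ne_zero hF
  have hchar : ∑ x : F, quadraticChar F (c ^ 2 + 4 * c * x ^ 3) = 0 :=
    (Fintype.sum_equiv cube _ (fun u ↦ quadraticChar F (c ^ 2 + 4 * c * u)) fun _ ↦ rfl).trans
      (sum_quadraticChar_add_mul hF _ (by simp [show (4 : F) = 2 * 2 by norm_num, h2, hc]))
  have hcube : ∑ x : F, (if x ^ 3 = 2 * c then 1 else 0 : ℤ) = 1 :=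
    (Fintype.sum_equiv cube _ (fun u ↦ if u = 2 * c then 1 else 0) fun _ ↦ rfl).trans (by simp)
  have h0 : ¬(0 : F) ^ 3 = 2 * c := by simpa [eq_comm] using mul_ne_zero h2 hc
  rw [sum_congr rfl fun x hx ↦ card_filter_cubicShift_eq hF hc (ne_of_mem_erase hx),
    sum_sub_distrib, sum_add_distrib, sum_const, card_erase_of_mem (mem_univ _), card_univ,
    sum_erase_eq_sub (mem_univ _), sum_erase_eq_sub (mem_univ _), hchar, hcube, if_neg h0,
    zero_pow three_ne_zero, mul_zero, add_zero, quadraticChar_sq_one' hc, nsmul_eq_mul]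
  push_cast [Nat.cast_sub Fintype.card_pos]
  ring

theorem sum_cubicCharSum_sq (hF : ringChar F ≠ 2) (hc : c ≠ 0)
    (h3 : (Fintype.card F - 1).Coprime 3) :
    ∑ l : F, cubicCharSum c l ^ 2 = (Fintype.card F : ℤ) ^ 2 - Fintype.card F - 1 := by
  simp_rw [cubicCharSum_eq, add_sq, sum_add_distrib, ← mul_sum, sum_sum_quadraticChar_add hF,
    sum_sq_sum_quadraticChar_add hF, sum_card_filter_cubicShift_eq hF hc h3,
    quadraticChar_sq_one hc, sum_const, card_erase_of_mem (mem_univ _), card_univ]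
  push_cast [Nat.cast_sub Fintype.card_pos]
  ring

end

theorem stmt17 (p : ℕ) [Fact p.Prime] (hp : 3 < p) (hp3 : p % 3 = 2)
    (c : ZMod p) (hc : c ≠ 0) :
    ((((∑ l : ZMod p, (∑ x : ZMod p, quadraticChar (ZMod p) (x ^ 3 + l * x ^ 2 + c)) ^ 2) : ℤ) : ℚ) / p) -
      ((((∑ l : ZMod p, ∑ x : ZMod p, quadraticChar (ZMod p) (x ^ 3 + l * x ^ 2 + c)) : ℤ) : ℚ) / p) ^ 2
      = p - 2 - 1 / p := by
  have hF : ringChar (ZMod p) ≠ 2 := by rw [ZMod.ringChar_zmod_n]; omega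
  have h3 : (Fintype.card (ZMod p) - 1).Coprime 3 := by
    rw [ZMod.card]
    exact ((Nat.Prime.coprime_iff_not_dvd Nat.prime_three).2 (by omega)).symm
  have hmean := sum_cubicCharSum hF c
  have hsq := sum_cubicCharSum_sq hF hc h3
  simp only [cubicCharSum, ZMod.card] at hmean hsq
  rw [hmean, hsq]
  have hσ : ((quadraticChar (ZMod p) c : ℤ) : ℚ) ^ 2 = 1 := by
    exact_mod_cast quadraticChar_sq_one hc
  have hp0 : (p : ℚ) ≠ 0 := by exact_mod_cast (Fact.out : p.Prime).ne_zero
  push_cast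
  field_simp
  linear_combination (-(p : ℚ)) * hσ
end

section
/- Let p > 3 be prime. For S_λ = Σ_{x ∈ F_p} σ(x³ − 3x + 1 + λ(x² − x)), the variance of (S_λ)_{λ∈F_p} equals p − 2 − 1/p − 2(1 + σ(−1) + σ(−3)). -/
/-!
Expanding the square and summing over `λ` first reduces `∑ S_λ²` to the sums
`∑_λ σ((A + λB)(C + λD))`, which equal `-σ(BD)`, plus `p σ(BD)` (or `p σ(AC)`
if `B = D = 0`) exactly when `(A : B) = (C : D)`. For `A, B, C, D = f x, g x, f y, g y` with
`f = x³ - 3x + 1` and `g = x² - x`, this condition says that `y` lies in the orbit of `x` under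
the Möbius map `τ x = 1 / (1 - x)` of order three, which permutes the roots of every `f + λ g`
(a simplest cubic). Each `x` then contributes `1 + σ(x - 1) + σ(-x)`, except that the fixed
points of `τ`, the `1 + σ(-3)` roots of `x² - x + 1`, are counted once instead of three times;
hence `∑ S_λ² = p² - 2p - 1 - 2p σ(-3)`. Only the zeros `0, 1` of `g` contribute to
`∑ S_λ = p (1 + σ(-1))`.
-/

open Finset

section QuadraticCharSums

variable {F : Type*} [Field F] [Fintype F] [DecidableEq F]

local notation "χ" => quadraticChar F

lemma quadraticChar_sum_add_mul (hF : ringChar F ≠ 2) (a : F) {b : F} (hb : b ≠ 0) :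
    ∑ l : F, χ (a + l * b) = 0 := by
  rw [← quadraticChar_sum_zero hF]
  exact ((Equiv.mulRight₀ b hb).trans (Equiv.addLeft a)).sum_comp χ

lemma quadraticChar_sum_mul_add (hF : ringChar F ≠ 2) (t : F) :
    ∑ l : F, χ (l * (l + t)) = (if t = 0 then (Fintype.card F : ℤ) else 0) - 1 := by
  have h : ∀ l : F, χ (l * (l + t)) = χ (1 + l⁻¹ * t) - if l = 0 then 1 else 0 := by
    intro l
    rcases eq_or_ne l 0 with rfl | hl
    · simp
    · rw [if_neg hl, sub_zero, show l * (l + t) = (1 + l⁻¹ * t) * l ^ 2 by field_simp,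
        map_mul, quadraticChar_sq_one' hl, mul_one]
  rw [sum_congr rfl fun l _ => h l, sum_sub_distrib, sum_boole, filter_eq', if_pos (mem_univ _),
    Fintype.sum_equiv (Equiv.inv F) (fun l => χ (1 + l⁻¹ * t)) (fun m => χ (1 + m * t))
      fun _ => rfl, card_singleton]
  split_ifs with ht
  · simp [ht]
  · rw [quadraticChar_sum_add_mul hF 1 ht]; simp

lemma quadraticChar_sum_add_mul_mul_add_mul (hF : ringChar F ≠ 2) {A B C D : F}
    (hAB : B = 0 → A ≠ 0) (hCD : D = 0 → C ≠ 0) :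
    ∑ l : F, χ ((A + l * B) * (C + l * D)) =
      Fintype.card F * (if A * D = C * B then (if B = 0 then χ (A * C) else χ (B * D)) else 0)
        - χ (B * D) := by
  rcases eq_or_ne B 0 with rfl | hB <;> rcases eq_or_ne D 0 with rfl | hD
  · simp
  · simp_rw [mul_zero, add_zero, map_mul χ A, ← mul_sum, quadraticChar_sum_add_mul hF C hD]
    simp [hAB rfl, hD]
  · simp_rw [mul_zero, add_zero, map_mul χ _ C, ← sum_mul, quadraticChar_sum_add_mul hF A hB]
    simp [hCD rfl, hB]
  · have hfac : ∀ l, (A + l * B) * (C + l * D) =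
        B * D * ((l + A / B) * (l + A / B + (C / D - A / B))) := by
      intro l; field_simp; ring
    simp_rw [hfac, map_mul χ (B * D), ← mul_sum]
    rw [Fintype.sum_equiv (Equiv.addRight (A / B))
        (fun l => χ ((l + A / B) * (l + A / B + (C / D - A / B))))
        (fun m => χ (m * (m + (C / D - A / B)))) fun _ => rfl,
      quadraticChar_sum_mul_add hF]
    have hiff : C / D - A / B = 0 ↔ A * D = C * B := by
      rw [sub_eq_zero, div_eq_div_iff hD hB, eq_comm]
    simp only [hiff, if_neg hB]
    split_ifs <;> ring

lemma card_filter_sq_sub_self_add_one (hF : ringChar F ≠ 2) :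
    (#{x : F | x ^ 2 - x + 1 = 0} : ℤ) = 1 + χ (-3) := by
  have h2 : (2 : F) ≠ 0 := Ring.two_ne_zero hF
  rw [add_comm, ← quadraticChar_card_sqrts hF, Set.toFinset_ofPred,
    card_equiv ((Equiv.mulLeft₀ 2 h2).trans (Equiv.subRight 1))]
  intro x
  simp only [mem_filter, mem_univ, true_and]
  change _ ↔ (2 * x - 1) ^ 2 = -3
  rw [show (2 * x - 1) ^ 2 = -3 ↔ 2 ^ 2 * (x ^ 2 - x + 1) = 0 by
    constructor <;> intro h <;> linear_combination h, mul_eq_zero, or_iff_right (pow_ne_zero 2 h2)]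

end QuadraticCharSums

namespace SimplestCubic

variable {F : Type*} [Field F]

def f (x : F) : F := x ^ 3 - 3 * x + 1

def g (x : F) : F := x ^ 2 - x

lemma g_eq_zero_iff {x : F} : g x = 0 ↔ x = 0 ∨ x = 1 := by
  rw [g, show x ^ 2 - x = x * (x - 1) by ring, mul_eq_zero, sub_eq_zero]

lemma f_ne_zero_of_g_eq_zero {x : F} (h : g x = 0) : f x ≠ 0 := by
  rcases g_eq_zero_iff.1 h with rfl | rfl <;> norm_num [f]

-- `f / g` is invariant under `τ x = 1 / (1 - x)`: its factors are the graphs of id, τ, τ⁻¹.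
lemma f_mul_g_sub_f_mul_g (x y : F) :
    f x * g y - f y * g x = (y - x) * ((1 - x) * y - 1) * (x * y - x + 1) := by
  unfold f g; ring

lemma f_mul_g_eq_iff (x y : F) :
    f x * g y = f y * g x ↔ y = x ∨ (1 - x) * y = 1 ∨ x * y = x - 1 := by
  rw [← sub_eq_zero, f_mul_g_sub_f_mul_g, mul_eq_zero, mul_eq_zero, sub_eq_zero, sub_eq_zero,
    or_assoc, ← sub_eq_zero (b := x - 1), show x * y - (x - 1) = x * y - x + 1 by ring]

variable [DecidableEq F]

-- Inclusion–exclusion: the graphs of `id`, `τ`, `τ⁻¹` meet pairwise exactly over the fixed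
-- points of `τ`, the roots of `x² - x + 1`.
lemma ite_f_mul_g_eq {M : Type*} [AddCommGroup M] (x y : F) (w : M) :
    (if f x * g y = f y * g x then w else 0) =
      (if y = x then w else 0) + (if (1 - x) * y = 1 then w else 0) +
        (if x * y = x - 1 then w else 0) -
          2 • (if y = x ∧ x ^ 2 - x + 1 = 0 then w else 0) := by
  simp only [f_mul_g_eq_iff]
  rcases eq_or_ne y x with rfl | hyx
  · have hb : (1 - y) * y = 1 ↔ y ^ 2 - y + 1 = 0 :=
      ⟨fun h => by linear_combination -h, fun h => by linear_combination -h⟩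
    have hc : y * y = y - 1 ↔ y ^ 2 - y + 1 = 0 :=
      ⟨fun h => by linear_combination h, fun h => by linear_combination h⟩
    by_cases hr : y ^ 2 - y + 1 = 0
    · simp only [hb, hr, hc, or_self, ↓reduceIte, and_self]
      abel
    · simp [hb, hc, hr]
  · by_cases hb : (1 - x) * y = 1
    · have hc : x * y ≠ x - 1 := fun hc => hyx (by linear_combination hb + hc)
      simp [hyx, hb, hc]
    · simp [hyx, hb]

variable [Fintype F]

local notation "χ" => quadraticChar F

-- The coefficient of `p` in `quadraticChar_sum_add_mul_mul_add_mul` at `f x, g x, f y, g y`.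
def weight (x y : F) : ℤ := if g x = 0 then χ (f x * f y) else χ (g x * g y)

lemma weight_self (x : F) : weight x x = 1 := by
  rw [weight]
  split_ifs with hg
  · rw [← sq, quadraticChar_sq_one' (f_ne_zero_of_g_eq_zero hg)]
  · rw [← sq, quadraticChar_sq_one' hg]

lemma sum_ite_one_sub_mul_eq_one (x : F) :
    ∑ y, (if (1 - x) * y = 1 then weight x y else 0) = χ (x - 1) := by
  rcases eq_or_ne x 1 with rfl | hx
  · simp
  have hx' : 1 - x ≠ 0 := sub_ne_zero.2 hx.symm
  simp_rw [show ∀ y, (1 - x) * y = 1 ↔ y = (1 - x)⁻¹ from fun y =>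
    ⟨eq_inv_of_mul_eq_one_right, by rintro rfl; exact mul_inv_cancel₀ hx'⟩]
  rw [sum_ite_eq' univ, if_pos (mem_univ _), weight]
  split_ifs with hg
  · obtain rfl : x = 0 := (g_eq_zero_iff.1 hg).resolve_right hx
    norm_num [f]
  · have hx0 : x ≠ 0 := fun h => hg (g_eq_zero_iff.2 (Or.inl h))
    rw [show g x * g (1 - x)⁻¹ = (x - 1) * (x / (1 - x)) ^ 2 by unfold g; field_simp; ring,
      map_mul, quadraticChar_sq_one' (div_ne_zero hx0 hx'), mul_one]

lemma sum_ite_mul_eq_sub_one (x : F) :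
    ∑ y, (if x * y = x - 1 then weight x y else 0) = χ (-x) := by
  rcases eq_or_ne x 0 with rfl | hx
  · simp
  simp_rw [show ∀ y, x * y = x - 1 ↔ y = (x - 1) / x from fun y => by
    rw [eq_div_iff hx, mul_comm]]
  rw [sum_ite_eq' univ, if_pos (mem_univ _), weight]
  split_ifs with hg
  · obtain rfl : x = 1 := (g_eq_zero_iff.1 hg).resolve_left hx
    norm_num [f]
  · have hx1 : x - 1 ≠ 0 := sub_ne_zero.2 fun h => hg (g_eq_zero_iff.2 (Or.inr h))
    rw [show g x * g ((x - 1) / x) = -x * ((x - 1) / x) ^ 2 by unfold g; field_simp; ring,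
      map_mul, quadraticChar_sq_one' (div_ne_zero hx1 hx), mul_one]

lemma sum_ite_f_mul_g_eq_weight (x : F) :
    ∑ y, (if f x * g y = f y * g x then weight x y else 0) =
      1 + χ (x - 1) + χ (-x) - 2 * if x ^ 2 - x + 1 = 0 then 1 else 0 := by
  simp_rw [ite_f_mul_g_eq, sum_sub_distrib, sum_add_distrib, ← smul_sum, ite_and,
    sum_ite_eq' univ x, if_pos (mem_univ x), sum_ite_one_sub_mul_eq_one, sum_ite_mul_eq_sub_one,
    weight_self, nsmul_eq_mul, Nat.cast_ofNat]

lemma sum_sum_ite_f_mul_g_eq_weight (hF : ringChar F ≠ 2) :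
    ∑ x : F, ∑ y, (if f x * g y = f y * g x then weight x y else 0) =
      Fintype.card F - 2 * (1 + χ (-3)) := by
  simp_rw [sum_ite_f_mul_g_eq_weight, sum_sub_distrib, sum_add_distrib, ← mul_sum, sum_boole,
    card_filter_sq_sub_self_add_one hF]
  rw [Fintype.sum_equiv (Equiv.subRight 1) (fun x => χ (x - 1)) χ fun _ => rfl,
    Fintype.sum_equiv (Equiv.neg F) (fun x => χ (-x)) χ fun _ => rfl, quadraticChar_sum_zero hF,
    sum_const, card_univ, nsmul_one]
  ring

def charSum (l : F) : ℤ := ∑ x, χ (f x + l * g x)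

lemma sum_charSum (hF : ringChar F ≠ 2) :
    ∑ l : F, charSum l = Fintype.card F * (1 + χ (-1)) := by
  have hx : ∀ x : F, ∑ l, χ (f x + l * g x) =
      if g x = 0 then Fintype.card F * χ (f x) else 0 := by
    intro x
    split_ifs with hg
    · simp [hg]
    · exact quadraticChar_sum_add_mul hF _ hg
  have hzeros : ({x | g x = 0} : Finset F) = {0, 1} := by
    ext x; simp [g_eq_zero_iff]
  simp only [charSum]
  rw [sum_comm]
  simp_rw [hx]
  rw [← sum_filter, hzeros, sum_pair zero_ne_one, show f (0 : F) = 1 by norm_num [f],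
    show f (1 : F) = -1 by norm_num [f], map_one]
  ring

lemma sum_charSum_sq (hF : ringChar F ≠ 2) :
    ∑ l : F, charSum l ^ 2 =
      Fintype.card F ^ 2 - 2 * Fintype.card F - 1 - 2 * Fintype.card F * χ (-3) := by
  have hg : ∑ x : F, χ (g x) = -1 := by
    simp_rw [g, show ∀ x : F, x ^ 2 - x = x * (x + -1) from fun x => by ring]
    rw [quadraticChar_sum_mul_add hF, if_neg (neg_ne_zero.2 one_ne_zero), zero_sub]
  calc ∑ l : F, charSum l ^ 2
      = ∑ x, ∑ y, ∑ l, χ ((f x + l * g x) * (f y + l * g y)) := by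
        simp_rw [charSum, sq, sum_mul_sum, ← map_mul]
        rw [sum_comm]
        exact sum_congr rfl fun x _ => sum_comm
    _ = ∑ x, ∑ y, (Fintype.card F * (if f x * g y = f y * g x then weight x y else 0)
          - χ (g x) * χ (g y)) := by
        simp_rw [quadraticChar_sum_add_mul_mul_add_mul hF f_ne_zero_of_g_eq_zero
          f_ne_zero_of_g_eq_zero, weight, map_mul]
    _ = Fintype.card F * (Fintype.card F - 2 * (1 + χ (-3))) - (∑ x, χ (g x)) ^ 2 := by
        rw [sq, sum_mul_sum, ← sum_sum_ite_f_mul_g_eq_weight hF]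
        simp_rw [mul_sum, sum_sub_distrib]
    _ = _ := by
        rw [hg]
        ring

end SimplestCubic

theorem stmt18 (p : ℕ) [Fact p.Prime] (hp : 3 < p) :
    ((((∑ l : ZMod p, (∑ x : ZMod p, quadraticChar (ZMod p) (x ^ 3 - 3 * x + 1 + l * (x ^ 2 - x))) ^ 2) : ℤ) : ℚ) / p) -
      ((((∑ l : ZMod p, ∑ x : ZMod p, quadraticChar (ZMod p) (x ^ 3 - 3 * x + 1 + l * (x ^ 2 - x))) : ℤ) : ℚ) / p) ^ 2
      = p - 2 - 1 / p - 2 * (1 + quadraticChar (ZMod p) (-1) + quadraticChar (ZMod p) (-3)) := by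
  have hF : ringChar (ZMod p) ≠ 2 := by
    rw [ZMod.ringChar_zmod_n]
    omega
  have h₁ := SimplestCubic.sum_charSum hF
  have h₂ := SimplestCubic.sum_charSum_sq hF
  simp only [SimplestCubic.charSum, SimplestCubic.f, SimplestCubic.g, ZMod.card] at h₁ h₂
  rw [h₁, h₂]
  have hχ : ((quadraticChar (ZMod p) (-1 : ZMod p) : ℤ) : ℚ) ^ 2 = 1 := by
    rw [← Int.cast_pow, quadraticChar_sq_one (neg_ne_zero.2 one_ne_zero), Int.cast_one]
  have hp₀ : (p : ℚ) ≠ 0 := Nat.cast_ne_zero.2 (by omega)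
  push_cast
  field_simp
  linear_combination -(p : ℚ) * hχ
end
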